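/- arXiv:1703.06865 — 5 statements merged into one kernel-verified Lean document; each statement's English description precedes it below -/
import Mathlib

section
/- For any positive integer n, the sum over primes p in [Y,Z) dividing n (with p^k exactly dividing n, k≥1) of w(n/p^k), where w(m) = 1/(#{primes p in [Y,Z) dividing m} + 1), equals 1 if n has at least one prime factor in [Y,Z), and equals 0 otherwise. -/
open Finset

/-! Removing the full `p`-part from `n` deletes exactly `p` from the set `S` of prime factors of
`n` in `[Y, Z)`, so every term of the sum equals `1 / #S`, and there are `#S` of them. -/

theorem Nat.primeFactors_ordCompl (n p : ℕ) :
    (n / p ^ n.factorization p).primeFactors = n.primeFactors.erase p := by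
  rw [← Nat.support_factorization, Nat.factorization_ordCompl, Finsupp.support_erase,
    Nat.support_factorization]

theorem Finset.sum_one_div_card_erase_add_one {α : Type*} [DecidableEq α] (s : Finset α) :
    ∑ a ∈ s, 1 / (((s.erase a).card : ℝ) + 1) = if s.Nonempty then 1 else 0 := by
  have hterm : ∀ a ∈ s, 1 / (((s.erase a).card : ℝ) + 1) = 1 / (s.card : ℝ) := by
    intro a ha
    rw [← Nat.cast_add_one, card_erase_add_one ha]
  rw [sum_congr rfl hterm, sum_const, nsmul_eq_mul]
  rcases s.eq_empty_or_nonempty with rfl | hs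
  · simp
  · have hcard : (s.card : ℝ) ≠ 0 := by exact_mod_cast hs.card_pos.ne'
    rw [if_pos hs, mul_one_div_cancel hcard]

theorem ramare_identity_general (Y Z : ℝ) (n : ℕ)
    (w : ℕ → ℝ)
    (hw : ∀ m : ℕ, w m =
      1 / (((m.primeFactors.filter (fun p : ℕ => Y ≤ (p : ℝ) ∧ (p : ℝ) < Z)).card : ℝ) + 1)) :
    ∑ p ∈ n.primeFactors.filter (fun p : ℕ => Y ≤ (p : ℝ) ∧ (p : ℝ) < Z),
        w (n / p ^ (n.factorization p)) =
      if (n.primeFactors.filter (fun p : ℕ => Y ≤ (p : ℝ) ∧ (p : ℝ) < Z)).Nonempty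
      then 1 else 0 := by
  simp only [hw, Nat.primeFactors_ordCompl, filter_erase]
  exact sum_one_div_card_erase_add_one _

/-- Ramaré's identity: for a positive integer `n`, with
`w m = 1 / (#{primes p ∈ [Y,Z) : p ∣ m} + 1)`, the sum over primes `p ∈ [Y,Z)` dividing `n`
(with `p ^ k` exactly dividing `n`) of `w (n / p ^ k)` equals `1` if `n` has a prime factor
in `[Y,Z)` and `0` otherwise. -/
theorem ramare_identity (Y Z : ℝ) (hY : 2 ≤ Y) (hYZ : Y < Z) (n : ℕ) (hn : 0 < n)
    (w : ℕ → ℝ)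
    (hw : ∀ m : ℕ, w m =
      1 / (((m.primeFactors.filter (fun p : ℕ => Y ≤ (p : ℝ) ∧ (p : ℝ) < Z)).card : ℝ) + 1)) :
    ∑ p ∈ n.primeFactors.filter (fun p : ℕ => Y ≤ (p : ℝ) ∧ (p : ℝ) < Z),
        w (n / p ^ (n.factorization p)) =
      if (n.primeFactors.filter (fun p : ℕ => Y ≤ (p : ℝ) ∧ (p : ℝ) < Z)).Nonempty
      then 1 else 0 :=
  ramare_identity_general Y Z n w hw
end

section
/- Let f, h be arithmetic functions with f multiplicative, let ψ be a Dirichlet character mod r inducing the character χ mod q (so r ∣ q), and let h be the multiplicative function supported only on prime powers p^k with p ∣ q and p ∤ r, defined so that the Dirichlet convolution h * (f·\overline{ψ}) vanishes at every prime power p^k with p ∣ q, p ∤ r, k ≥ 1. Then h * (f·\overline{ψ}) = f·\overline{χ}, and consequently S_f(x,χ) = ∑_{m ≤ x} h(m) S_f(x/m, ψ) for all x ≥ 1. -/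
/-!
Both `h * (f·ψ̄)` and `f·χ̄` are multiplicative, so it suffices to compare them at prime powers
`p^k`, `k ≥ 1`. When `p ∣ q` and `p ∤ r`, the left side vanishes by the choice of `h` and the right
side because `χ(p) = 0`. For every other prime `h(p^k) = 0`, so the left side is `f(p^k) ψ̄(p^k)`,
and `χ(p^k) = ψ(p^k)`: either `p ∤ q`, or `p ∣ r` and both characters vanish at `p`.
Summing the identity over `n ≤ x` and exchanging the order of summation gives the formula for
`S_f(x, χ)`.
-/

open Finset

section ToArithmeticFunction

variable {R : Type*}

theorem isMultiplicative_toArithmeticFunction_of_coprime [MonoidWithZero R] {u : ℕ → R}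
    (h1 : u 1 = 1) (hmul : ∀ m n, m.Coprime n → u (m * n) = u m * u n) :
    (toArithmeticFunction u).IsMultiplicative :=
  ArithmeticFunction.IsMultiplicative.iff_ne_zero.mpr
    ⟨by simpa [toArithmeticFunction] using h1, fun {m n} hm hn hmn => by
      simp [toArithmeticFunction, hm, hn, hmul m n hmn]⟩

theorem toArithmeticFunction_apply_of_ne_zero [Zero R] (u : ℕ → R) {n : ℕ} (hn : n ≠ 0) :
    toArithmeticFunction u n = u n := by
  simp [toArithmeticFunction, hn]

theorem toArithmeticFunction_mul_apply [Semiring R] (u v : ℕ → R) (n : ℕ) :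
    (toArithmeticFunction u * toArithmeticFunction v) n = ∑ d ∈ n.divisors, u d * v (n / d) := by
  change LSeries.convolution u v n = _
  exact (congrFun (LSeries.convolution_def u v) n).trans
    (Nat.sum_divisorsAntidiagonal fun a b => u a * v b)

theorem sum_Icc_sum_divisors_mul_eq [Semiring R] (u v : ℕ → R) (N : ℕ) :
    ∑ n ∈ Icc 1 N, ∑ d ∈ n.divisors, u d * v (n / d) =
      ∑ m ∈ Icc 1 N, u m * ∑ k ∈ Icc 1 (N / m), v k := by
  have hIcc : ∀ M, Icc 1 M = Ioc 0 M := fun M => by ext; simp; omega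
  simp_rw [← toArithmeticFunction_mul_apply, hIcc, ArithmeticFunction.sum_Ioc_mul_eq_sum_sum]
  refine sum_congr rfl fun m hm => ?_
  rw [toArithmeticFunction_apply_of_ne_zero _ (mem_Ioc.mp hm).1.ne']
  exact congrArg _ (sum_congr rfl fun k hk =>
    toArithmeticFunction_apply_of_ne_zero _ (mem_Ioc.mp hk).1.ne')

theorem sum_divisors_prime_pow_mul_eq_of_eq_zero [Semiring R] {u : ℕ → R} (v : ℕ → R)
    (hu1 : u 1 = 1) {p : ℕ} (hp : p.Prime) (hu : ∀ j, j ≠ 0 → u (p ^ j) = 0) (k : ℕ) :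
    ∑ d ∈ (p ^ k).divisors, u d * v (p ^ k / d) = v (p ^ k) := by
  rw [Nat.divisors_prime_pow hp, sum_map, sum_range_succ']
  simp [hu, hu1]

end ToArithmeticFunction

namespace DirichletCharacter

variable {R : Type*} [CommMonoidWithZero R] {n m : ℕ}

theorem map_natCast_of_not_coprime (χ : DirichletCharacter R n) {a : ℕ} (ha : ¬ a.Coprime n) :
    χ a = 0 :=
  χ.map_nonunit <| mt (ZMod.isUnit_iff_coprime a n).mp ha

theorem changeLevel_natCast_of_coprime (hm : n ∣ m) (χ : DirichletCharacter R n) {a : ℕ}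
    (ha : a.Coprime m) : changeLevel hm χ a = χ a := by
  obtain ⟨u, hu⟩ := (ZMod.isUnit_iff_coprime a m).mpr ha
  rw [← hu, changeLevel_eq_cast_of_dvd χ hm u, hu, ZMod.cast_natCast hm]

theorem changeLevel_natCast_eq (hm : n ∣ m) (χ : DirichletCharacter R n) {a : ℕ}
    (ha : ∀ p, p.Prime → p ∣ a → p ∣ m → p ∣ n) : changeLevel hm χ a = χ a := by
  by_cases hcop : a.Coprime m
  · exact changeLevel_natCast_of_coprime hm χ hcop
  obtain ⟨p, hp, hpa, hpm⟩ := Nat.Prime.not_coprime_iff_dvd.mp hcop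
  rw [map_natCast_of_not_coprime _ hcop, map_natCast_of_not_coprime χ
    (Nat.Prime.not_coprime_iff_dvd.mpr ⟨p, hp, hpa, ha p hp hpa hpm⟩)]

end DirichletCharacter

noncomputable def conjTwist {N : ℕ} (f : ℕ → ℂ) (χ : DirichletCharacter ℂ N) (n : ℕ) : ℂ :=
  f n * starRingEnd ℂ (χ n)

theorem isMultiplicative_toArithmeticFunction_conjTwist {N : ℕ} {f : ℕ → ℂ} (hf1 : f 1 = 1)
    (hfm : ∀ m n, m.Coprime n → f (m * n) = f m * f n) (χ : DirichletCharacter ℂ N) :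
    (toArithmeticFunction (conjTwist f χ)).IsMultiplicative :=
  isMultiplicative_toArithmeticFunction_of_coprime (by simp [conjTwist, hf1]) fun m n hmn => by
    simp only [conjTwist, hfm m n hmn, Nat.cast_mul, map_mul]
    ring

theorem toArithmeticFunction_mul_conjTwist_eq_conjTwist_changeLevel {f h : ℕ → ℂ}
    (hf1 : f 1 = 1) (hfm : ∀ m n, m.Coprime n → f (m * n) = f m * f n)
    (hh1 : h 1 = 1) (hhm : ∀ m n, m.Coprime n → h (m * n) = h m * h n)
    {q r : ℕ} (hrq : r ∣ q) (ψ : DirichletCharacter ℂ r)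
    (hsupp : ∀ p k, p.Prime → k ≠ 0 → (p ∣ q → p ∣ r) → h (p ^ k) = 0)
    (hvanish : ∀ p k, p.Prime → p ∣ q → ¬ p ∣ r → k ≠ 0 →
      ∑ d ∈ (p ^ k).divisors, h d * conjTwist f ψ (p ^ k / d) = 0) :
    toArithmeticFunction h * toArithmeticFunction (conjTwist f ψ) =
      toArithmeticFunction (conjTwist f (DirichletCharacter.changeLevel hrq ψ)) := by
  have hmul := isMultiplicative_toArithmeticFunction_of_coprime hh1 hhm
  refine (ArithmeticFunction.IsMultiplicative.eq_iff_eq_on_prime_powers _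
    (hmul.mul (isMultiplicative_toArithmeticFunction_conjTwist hf1 hfm ψ)) _
    (isMultiplicative_toArithmeticFunction_conjTwist hf1 hfm _)).mpr fun p k hp => ?_
  rw [toArithmeticFunction_mul_apply,
    toArithmeticFunction_apply_of_ne_zero _ (pow_ne_zero k hp.ne_zero)]
  by_cases hbad : p ∣ q ∧ ¬ p ∣ r
  · rcases eq_or_ne k 0 with rfl | hk
    · simp [conjTwist, hf1, hh1]
    rw [hvanish p k hp hbad.1 hbad.2 hk, conjTwist, DirichletCharacter.map_natCast_of_not_coprime _
      (Nat.Prime.not_coprime_iff_dvd.mpr ⟨p, hp, dvd_pow_self p hk, hbad.1⟩), map_zero, mul_zero]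
  · have hgood : p ∣ q → p ∣ r := fun hpq => by_contra fun hpr => hbad ⟨hpq, hpr⟩
    rw [sum_divisors_prime_pow_mul_eq_of_eq_zero _ hh1 hp (fun j hj => hsupp p j hp hj hgood),
      conjTwist, conjTwist, DirichletCharacter.changeLevel_natCast_eq]
    intro p' hp' hp'k
    rwa [(Nat.prime_dvd_prime_iff_eq hp' hp).mp (hp'.dvd_of_dvd_pow hp'k)]
theorem induced_char_convolution_general
    (f h : ℕ → ℂ)
    (hf1 : f 1 = 1) (hfm : ∀ m n : ℕ, Nat.Coprime m n → f (m * n) = f m * f n)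
    (q r : ℕ) (hrq : r ∣ q)
    (ψ : DirichletCharacter ℂ r) (χ : DirichletCharacter ℂ q)
    (hχ : χ = DirichletCharacter.changeLevel hrq ψ)
    (hh1 : h 1 = 1) (hhm : ∀ m n : ℕ, Nat.Coprime m n → h (m * n) = h m * h n)
    (hsupp : ∀ n : ℕ, n ≠ 1 →
      (¬ ∃ p k : ℕ, p.Prime ∧ 1 ≤ k ∧ p ∣ q ∧ ¬ p ∣ r ∧ n = p ^ k) → h n = 0)
    (hvanish : ∀ p k : ℕ, p.Prime → p ∣ q → ¬ p ∣ r → 1 ≤ k →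
      ∑ d ∈ (p ^ k).divisors,
        h d * (f (p ^ k / d) * (starRingEnd ℂ) (ψ ((p ^ k / d : ℕ) : ZMod r))) = 0) :
    (∀ n : ℕ, 0 < n →
      ∑ d ∈ n.divisors,
        h d * (f (n / d) * (starRingEnd ℂ) (ψ ((n / d : ℕ) : ZMod r))) =
          f n * (starRingEnd ℂ) (χ (n : ZMod q))) ∧
    ∀ x : ℝ, 1 ≤ x →
      ∑ n ∈ Finset.Icc 1 ⌊x⌋₊, f n * (starRingEnd ℂ) (χ (n : ZMod q)) =
        ∑ m ∈ Finset.Icc 1 ⌊x⌋₊, h m *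
          ∑ n ∈ Finset.Icc 1 ⌊x / (m : ℝ)⌋₊, f n * (starRingEnd ℂ) (ψ (n : ZMod r)) := by
  subst hχ
  have hsupp_pow : ∀ p k, p.Prime → k ≠ 0 → (p ∣ q → p ∣ r) → h (p ^ k) = 0 := by
    intro p k hp hk hpr
    refine hsupp _ (Nat.one_lt_pow hk hp.one_lt).ne' ?_
    rintro ⟨p', k', hp', hk', hp'q, hp'r, heq⟩
    obtain rfl : p' = p := (Nat.prime_dvd_prime_iff_eq hp' hp).mp
      (hp'.dvd_of_dvd_pow (heq ▸ dvd_pow_self p' (by omega)))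
    exact hp'r (hpr hp'q)
  have hconv := toArithmeticFunction_mul_conjTwist_eq_conjTwist_changeLevel hf1 hfm hh1 hhm hrq ψ
    hsupp_pow fun p k hp hpq hpr hk => hvanish p k hp hpq hpr (Nat.one_le_iff_ne_zero.mpr hk)
  have hpoint : ∀ n : ℕ, 0 < n →
      ∑ d ∈ n.divisors, h d * (f (n / d) * (starRingEnd ℂ) (ψ ((n / d : ℕ) : ZMod r))) =
        f n * (starRingEnd ℂ) (DirichletCharacter.changeLevel hrq ψ (n : ZMod q)) := fun n hn => by
    have hn' := DFunLike.congr_fun hconv n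
    rwa [toArithmeticFunction_mul_apply, toArithmeticFunction_apply_of_ne_zero _ hn.ne'] at hn'
  refine ⟨hpoint, fun x _ => ?_⟩
  calc _ = ∑ n ∈ Icc 1 ⌊x⌋₊, ∑ d ∈ n.divisors, h d * conjTwist f ψ (n / d) :=
        sum_congr rfl fun n hn => (hpoint n (mem_Icc.mp hn).1).symm
    _ = _ := by
      rw [sum_Icc_sum_divisors_mul_eq]
      simp_rw [Nat.floor_div_natCast]
      rfl

/-- If `ψ mod r` induces `χ mod q` (so `r ∣ q`), and `h` is the multiplicative function
supported only on prime powers `p^k` with `p ∣ q`, `p ∤ r`, chosen so that the Dirichlet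
convolution `h * (f·conj ψ)` vanishes at all such prime powers, then
`h * (f·conj ψ) = f·conj χ`, and consequently
`S_f(x,χ) = ∑_{m ≤ x} h(m) S_f(x/m, ψ)` for all `x ≥ 1`. -/
theorem induced_char_convolution
    (f h : ℕ → ℂ)
    (hf1 : f 1 = 1) (hfm : ∀ m n : ℕ, Nat.Coprime m n → f (m * n) = f m * f n)
    (q r : ℕ) [NeZero q] [NeZero r] (hrq : r ∣ q)
    (ψ : DirichletCharacter ℂ r) (χ : DirichletCharacter ℂ q)
    (hχ : χ = DirichletCharacter.changeLevel hrq ψ)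
    (hh1 : h 1 = 1) (hhm : ∀ m n : ℕ, Nat.Coprime m n → h (m * n) = h m * h n)
    (hsupp : ∀ n : ℕ, n ≠ 1 →
      (¬ ∃ p k : ℕ, p.Prime ∧ 1 ≤ k ∧ p ∣ q ∧ ¬ p ∣ r ∧ n = p ^ k) → h n = 0)
    (hvanish : ∀ p k : ℕ, p.Prime → p ∣ q → ¬ p ∣ r → 1 ≤ k →
      ∑ d ∈ (p ^ k).divisors,
        h d * (f (p ^ k / d) * (starRingEnd ℂ) (ψ ((p ^ k / d : ℕ) : ZMod r))) = 0) :
    (∀ n : ℕ, 0 < n →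
      ∑ d ∈ n.divisors,
        h d * (f (n / d) * (starRingEnd ℂ) (ψ ((n / d : ℕ) : ZMod r))) =
          f n * (starRingEnd ℂ) (χ (n : ZMod q))) ∧
    ∀ x : ℝ, 1 ≤ x →
      ∑ n ∈ Finset.Icc 1 ⌊x⌋₊, f n * (starRingEnd ℂ) (χ (n : ZMod q)) =
        ∑ m ∈ Finset.Icc 1 ⌊x⌋₊, h m *
          ∑ n ∈ Finset.Icc 1 ⌊x / (m : ℝ)⌋₊, f n * (starRingEnd ℂ) (ψ (n : ZMod r)) :=
  induced_char_convolution_general f h hf1 hfm q r hrq ψ χ hχ hh1 hhm hsupp hvanish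
end

section
/- Suppose f ∈ 𝒞, i.e., f is a multiplicative function whose Dirichlet series F(s) = ∑ f(n)n^{-s} satisfies −F'/F(s) = ∑ Λ_f(n) n^{-s} with |Λ_f(n)| ≤ Λ(n) for all n. Then |f(n)| ≤ 1 for all n ≥ 1. -/
open Finset ArithmeticFunction

/-! Strong induction on `n`. Since `Λ_f(1) = 0`, the identity `f(n) log n = ∑_{d ∣ n} Λ_f(d) f(n/d)`
involves `f` only at proper divisors of `n`, where `|f| ≤ 1` by induction; hence
`|f(n)| log n ≤ ∑_{d ∣ n} Λ(d) = log n`. -/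

section

variable {R : Type*} [SeminormedRing R]

theorem norm_mul_le_vonMangoldt_of_ne_one {a b : R} {d : ℕ} (ha : ‖a‖ ≤ vonMangoldt d)
    (hb : d ≠ 1 → ‖b‖ ≤ 1) : ‖a * b‖ ≤ vonMangoldt d := by
  rcases eq_or_ne d 1 with rfl | hd
  · have ha0 : ‖a‖ = 0 := le_antisymm (by simpa using ha) (norm_nonneg a)
    simpa [ha0] using norm_mul_le a b
  · calc ‖a * b‖ ≤ ‖a‖ * ‖b‖ := norm_mul_le a b
      _ ≤ vonMangoldt d * 1 := mul_le_mul ha (hb hd) (norm_nonneg b) vonMangoldt_nonneg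
      _ = vonMangoldt d := mul_one _

theorem norm_sum_divisors_mul_le_log {g Λg : ℕ → R} {n : ℕ}
    (hΛ : ∀ d, ‖Λg d‖ ≤ vonMangoldt d) (hg : ∀ d ∈ n.divisors, d ≠ 1 → ‖g (n / d)‖ ≤ 1) :
    ‖∑ d ∈ n.divisors, Λg d * g (n / d)‖ ≤ Real.log n :=
  calc ‖∑ d ∈ n.divisors, Λg d * g (n / d)‖
      ≤ ∑ d ∈ n.divisors, ‖Λg d * g (n / d)‖ := norm_sum_le _ _
    _ ≤ ∑ d ∈ n.divisors, vonMangoldt d :=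
      sum_le_sum fun d hd => norm_mul_le_vonMangoldt_of_ne_one (hΛ d) (hg d hd)
    _ = Real.log n := vonMangoldt_sum

end

theorem abs_le_one_of_vonMangoldt_bound_general
    (f Λf : ℕ → ℂ)
    (hf1 : f 1 = 1)
    (hconv : ∀ n : ℕ, 1 ≤ n →
      f n * (Real.log n : ℂ) = ∑ d ∈ n.divisors, Λf d * f (n / d))
    (hΛ : ∀ n : ℕ, ‖Λf n‖ ≤ ArithmeticFunction.vonMangoldt n) :
    ∀ n : ℕ, 1 ≤ n → ‖f n‖ ≤ 1 := by
  intro n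
  induction n using Nat.strong_induction_on with
  | _ n ih =>
    intro hn
    rcases hn.eq_or_lt with rfl | hn1
    · simp [hf1]
    have hlog : 0 < Real.log n := Real.log_pos (by exact_mod_cast hn1)
    have hproper : ∀ d ∈ n.divisors, d ≠ 1 → ‖f (n / d)‖ ≤ 1 := by
      intro d hd hd1
      obtain ⟨hdvd, -⟩ := Nat.mem_divisors.mp hd
      have hd2 : 2 ≤ d := by
        have := Nat.pos_of_dvd_of_pos hdvd hn
        omega
      exact ih _ (Nat.div_lt_self hn hd2) (Nat.div_pos (Nat.le_of_dvd hn hdvd) (by omega))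
    have key : ‖f n‖ * Real.log n ≤ 1 * Real.log n :=
      calc ‖f n‖ * Real.log n = ‖f n * (Real.log n : ℂ)‖ := by
            rw [norm_mul, Complex.norm_of_nonneg hlog.le]
        _ ≤ 1 * Real.log n := by
            rw [one_mul, hconv n hn]
            exact norm_sum_divisors_mul_le_log hΛ hproper
    exact le_of_mul_le_mul_right key hlog

/-- If `f` is a multiplicative function whose "von Mangoldt factorization" `Λ_f`,
defined by `f(n) log n = ∑_{d ∣ n} Λ_f(d) f(n/d)`, satisfies `|Λ_f(n)| ≤ Λ(n)` for all `n`,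
then `|f(n)| ≤ 1` for all `n ≥ 1`. -/
theorem abs_le_one_of_vonMangoldt_bound
    (f Λf : ℕ → ℂ)
    (hf1 : f 1 = 1) (hfm : ∀ m n : ℕ, Nat.Coprime m n → f (m * n) = f m * f n)
    (hconv : ∀ n : ℕ, 1 ≤ n →
      f n * (Real.log n : ℂ) = ∑ d ∈ n.divisors, Λf d * f (n / d))
    (hΛ : ∀ n : ℕ, ‖Λf n‖ ≤ ArithmeticFunction.vonMangoldt n) :
    ∀ n : ℕ, 1 ≤ n → ‖f n‖ ≤ 1 :=
  abs_le_one_of_vonMangoldt_bound_general f Λf hf1 hconv hΛ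
end

section
/- Let Q ≥ 1 and x ≥ 1. For each modulus q with Q < q ≤ 2Q fix a residue a_q coprime to q and a complex number ξ_q of modulus 1, and define F(n) = ∑_{q ∼ Q} ξ_q (1_{n ≡ a_q (mod q)} − (1/q_r) 1_{n ≡ a_q (mod q_s)}), where q = q_s q_r is the factorization of q into its w-smooth part q_s and w-rough part q_r. Then for every positive integer d ≤ x/(2Q), one has d · ∑_{n ≤ x, d ∣ n} |F(n)| ≪ x, with an absolute implied constant. -/
/-! The triangle inequality reduces the bound to one modulus at a time: for `q ∼ Q`,
`d · #{n ≤ x : d ∣ n, n ≡ a_q (q)} ≤ x/q + d`, because when `d` is coprime to `q` these `n`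
form one residue class modulo `dq` (and otherwise there are none, as `a_q` is coprime to `q`).
The same bound for `q_s`, divided by `q_r`, gives again `x/q + d`. Summing over the `Q` moduli
yields `2x + 2Qd ≤ 3x`. -/

open Finset

/-- The largest `w`-smooth divisor of `q` (its `w`-smooth part). -/
noncomputable def smoothPart (w : ℝ) (q : ℕ) : ℕ :=
  ∏ p ∈ q.primeFactors.filter (fun p : ℕ => (p : ℝ) ≤ w), p ^ q.factorization p

noncomputable def roughPart (w : ℝ) (q : ℕ) : ℕ := q / smoothPart w q

lemma smoothPart_dvd (w : ℝ) {q : ℕ} (hq : q ≠ 0) : smoothPart w q ∣ q :=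
  calc smoothPart w q ∣ ∏ p ∈ q.primeFactors, p ^ q.factorization p :=
        prod_dvd_prod_of_subset _ _ _ (filter_subset _ _)
    _ = q := (Nat.prod_primeFactors_pow_factorization hq).symm

lemma smoothPart_pos (w : ℝ) (q : ℕ) : 0 < smoothPart w q :=
  prod_pos fun _ hp => pow_pos (Nat.pos_of_mem_primeFactors (mem_filter.mp hp).1) _

lemma roughPart_mul_smoothPart (w : ℝ) {q : ℕ} (hq : q ≠ 0) :
    roughPart w q * smoothPart w q = q :=
  Nat.div_mul_cancel (smoothPart_dvd w hq)

lemma roughPart_pos (w : ℝ) {q : ℕ} (hq : q ≠ 0) : 0 < roughPart w q :=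
  Nat.div_pos (Nat.le_of_dvd (Nat.pos_of_ne_zero hq) (smoothPart_dvd w hq)) (smoothPart_pos w q)

lemma Finset.card_le_div_add_one_of_modEq {S : Finset ℕ} {N k : ℕ} (hS : ∀ n ∈ S, n ≤ N)
    (hmod : ∀ n ∈ S, ∀ n' ∈ S, n ≡ n' [MOD k]) : #S ≤ N / k + 1 := by
  have hinj : Set.InjOn (· / k) S := fun n hn n' hn' hdiv => by
    rw [← Nat.div_add_mod n k, ← Nat.div_add_mod n' k]
    exact congrArg₂ _ (congrArg _ hdiv) (hmod n hn n' hn')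
  simpa using card_le_card_of_injOn (t := range (N / k + 1)) (· / k)
    (fun n hn => mem_range.2 (Nat.lt_succ_of_le (Nat.div_le_div_right (hS n hn)))) hinj

lemma Nat.Coprime.of_dvd_of_modEq {a d m n : ℕ} (ha : a.Coprime m) (hdn : d ∣ n)
    (hn : n ≡ a [MOD m]) : d.Coprime m :=
  Nat.Coprime.coprime_dvd_left hdn (hn.gcd_eq.trans ha)

lemma card_filter_dvd_modEq_le {d m : ℕ} (hdm : d.Coprime m) (N a : ℕ) :
    #{n ∈ Icc 1 N | d ∣ n ∧ n % m = a % m} ≤ N / (d * m) + 1 := by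
  refine card_le_div_add_one_of_modEq (fun n hn => (mem_Icc.1 (mem_filter.1 hn).1).2) ?_
  intro n hn n' hn'
  obtain ⟨-, hdn, hna⟩ := mem_filter.1 hn
  obtain ⟨-, hdn', hna'⟩ := mem_filter.1 hn'
  refine (Nat.modEq_and_modEq_iff_modEq_mul hdm).1 ⟨?_, hna.trans hna'.symm⟩
  exact (Nat.modEq_zero_iff_dvd.2 hdn).trans (Nat.modEq_zero_iff_dvd.2 hdn').symm

lemma mul_card_filter_dvd_modEq_le {a m : ℕ} (ha : a.Coprime m) (d N : ℕ) :
    (d : ℝ) * #{n ∈ Icc 1 N | d ∣ n ∧ n % m = a % m} ≤ N / m + d := by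
  by_cases hdm : d.Coprime m
  · have hcard : (#{n ∈ Icc 1 N | d ∣ n ∧ n % m = a % m} : ℝ) ≤ N / (d * m) + 1 := by
      refine (Nat.cast_le.2 (card_filter_dvd_modEq_le hdm N a)).trans ?_
      push_cast
      gcongr
      exact_mod_cast Nat.cast_div_le (α := ℝ) (m := N) (n := d * m)
    have hdiv : (d : ℝ) * (N / (d * m)) ≤ N / m := by
      rcases eq_or_ne d 0 with rfl | hd
      · simp only [Nat.cast_zero, zero_mul]; positivity
      · rw [mul_div_assoc', mul_div_mul_left _ _ (Nat.cast_ne_zero.2 hd)]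
    nlinarith [Nat.cast_nonneg (α := ℝ) d]
  · have hempty : {n ∈ Icc 1 N | d ∣ n ∧ n % m = a % m} = ∅ :=
      filter_eq_empty_iff.2 fun _ _ ⟨hdn, hn⟩ => hdm (ha.of_dvd_of_modEq hdn hn)
    rw [hempty, card_empty, Nat.cast_zero, mul_zero]
    positivity

lemma norm_mul_indicator_sub_le {ξ : ℂ} (hξ : ‖ξ‖ = 1) (P P' : Prop) [Decidable P] [Decidable P']
    (r : ℕ) :
    ‖ξ * ((if P then (1 : ℂ) else 0) - (1 / (r : ℂ)) * (if P' then (1 : ℂ) else 0))‖ ≤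
      (if P then (1 : ℝ) else 0) + (1 / (r : ℝ)) * (if P' then (1 : ℝ) else 0) := by
  rw [norm_mul, hξ, one_mul]
  refine (norm_sub_le _ _).trans_eq ?_
  rw [norm_mul, norm_div, norm_one, Complex.norm_natCast]
  congr 1 <;> [skip; congr 1] <;> split_ifs <;> simp

lemma mul_sum_norm_term_le (w : ℝ) {q a : ℕ} (hq : q ≠ 0) (ha : a.Coprime q) {ξ : ℂ}
    (hξ : ‖ξ‖ = 1) (d N : ℕ) :
    (d : ℝ) * ∑ n ∈ Icc 1 N with d ∣ n,
      ‖ξ * ((if n % q = a % q then (1 : ℂ) else 0) -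
        (1 / (roughPart w q : ℂ)) *
          (if n % smoothPart w q = a % smoothPart w q then (1 : ℂ) else 0))‖ ≤
      2 * (N / q + d) := by
  have hqr : (1 : ℝ) ≤ roughPart w q := by exact_mod_cast roughPart_pos w hq
  have hq_eq : (q : ℝ) = roughPart w q * smoothPart w q := by
    exact_mod_cast (roughPart_mul_smoothPart w hq).symm
  have hfull := mul_card_filter_dvd_modEq_le ha d N
  have hsmooth := mul_card_filter_dvd_modEq_le (ha.coprime_dvd_right (smoothPart_dvd w hq)) d N
  have hsmooth' : (d : ℝ) * (1 / roughPart w q *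
      #{n ∈ Icc 1 N | d ∣ n ∧ n % smoothPart w q = a % smoothPart w q}) ≤ N / q + d :=
    calc _ = 1 / roughPart w q * ((d : ℝ) *
          #{n ∈ Icc 1 N | d ∣ n ∧ n % smoothPart w q = a % smoothPart w q}) := by ring
      _ ≤ 1 / roughPart w q * (N / smoothPart w q + d) := by gcongr
      _ = N / q + d / roughPart w q := by rw [hq_eq]; field_simp
      _ ≤ N / q + d := by gcongr; exact div_le_self (Nat.cast_nonneg d) hqr
  calc _ ≤ (d : ℝ) * ∑ n ∈ Icc 1 N with d ∣ n, ((if n % q = a % q then (1 : ℝ) else 0) +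
        (1 / (roughPart w q : ℝ)) *
          (if n % smoothPart w q = a % smoothPart w q then (1 : ℝ) else 0)) := by
        gcongr with n; exact norm_mul_indicator_sub_le hξ _ _ _
    _ = (d : ℝ) * #{n ∈ Icc 1 N | d ∣ n ∧ n % q = a % q} + (d : ℝ) * (1 / roughPart w q *
          #{n ∈ Icc 1 N | d ∣ n ∧ n % smoothPart w q = a % smoothPart w q}) := by
        rw [sum_add_distrib, ← mul_sum, sum_boole, sum_boole, filter_filter, filter_filter,
          mul_add]
    _ ≤ 2 * (N / q + d) := by linarith

/-- For `F(n) = ∑_{Q < q ≤ 2Q} ξ_q (1_{n ≡ a_q (q)} − (1/q_r) 1_{n ≡ a_q (q_s)})` with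
`|ξ_q| = 1` and `a_q` coprime to `q`, one has `d · ∑_{n ≤ x, d ∣ n} |F(n)| ≪ x`
uniformly for `d ≤ x/(2Q)`, with an absolute implied constant. -/
theorem divisor_weighted_L1_bound :
    ∃ C : ℝ, 0 < C ∧ ∀ (w : ℝ), 2 ≤ w → ∀ (Q : ℕ), 1 ≤ Q → ∀ (x : ℝ), 1 ≤ x →
      ∀ (ξ : ℕ → ℂ), (∀ q, ‖ξ q‖ = 1) →
      ∀ (a : ℕ → ℕ), (∀ q ∈ Finset.Ioc Q (2 * Q), Nat.Coprime (a q) q) →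
      ∀ d : ℕ, 0 < d → (d : ℝ) ≤ x / (2 * Q) →
      (d : ℝ) * ∑ n ∈ (Finset.Icc 1 ⌊x⌋₊).filter (fun n => d ∣ n),
        ‖∑ q ∈ Finset.Ioc Q (2 * Q), ξ q *
          ((if n % q = a q % q then (1 : ℂ) else 0) -
            (1 / (roughPart w q : ℂ)) *
              (if n % smoothPart w q = a q % smoothPart w q then (1 : ℂ) else 0))‖ ≤
        C * x := by
  refine ⟨3, by norm_num, fun w _ Q hQ x hx ξ hξ a ha d _ hdx => ?_⟩
  have hQ0 : (0 : ℝ) < Q := by exact_mod_cast hQ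
  have hNx : (⌊x⌋₊ : ℝ) ≤ x := Nat.floor_le (by linarith)
  have hQd : (Q : ℝ) * (2 * d) ≤ x := by
    rw [le_div_iff₀ (by positivity)] at hdx; linarith
  calc _ ≤ (d : ℝ) * ∑ n ∈ Icc 1 ⌊x⌋₊ with d ∣ n, ∑ q ∈ Ioc Q (2 * Q), ‖ξ q *
          ((if n % q = a q % q then (1 : ℂ) else 0) - (1 / (roughPart w q : ℂ)) *
            (if n % smoothPart w q = a q % smoothPart w q then (1 : ℂ) else 0))‖ := by
        gcongr; exact norm_sum_le _ _
    _ = ∑ q ∈ Ioc Q (2 * Q), (d : ℝ) * ∑ n ∈ Icc 1 ⌊x⌋₊ with d ∣ n, ‖ξ q *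
          ((if n % q = a q % q then (1 : ℂ) else 0) - (1 / (roughPart w q : ℂ)) *
            (if n % smoothPart w q = a q % smoothPart w q then (1 : ℂ) else 0))‖ := by
        rw [sum_comm, mul_sum]
    _ ≤ ∑ q ∈ Ioc Q (2 * Q), 2 * (⌊x⌋₊ / (Q : ℝ) + d) := by
        refine sum_le_sum fun q hq => ?_
        have hQq : (Q : ℝ) ≤ q := by exact_mod_cast (mem_Ioc.1 hq).1.le
        refine (mul_sum_norm_term_le w (by grind) (ha q hq) (hξ q) d _).trans ?_
        gcongr
    _ = 2 * ⌊x⌋₊ + 2 * (Q * d) := by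
        rw [sum_const, Nat.card_Ioc, show 2 * Q - Q = Q by omega, nsmul_eq_mul]
        field_simp
    _ ≤ 3 * x := by linarith
end

section
/- Fix w ≥ 2 and Q ≥ 2. Then ∑_{q,q' ∼ Q, (q_r, q_r') > 1} (q,q')/φ((q,q')) ≪ Q²/(w log w), where q ∼ Q means Q < q ≤ 2Q, (q,q') is gcd, q_r denotes the w-rough part of q (the largest divisor of q with no prime factor ≤ w), and the sum is over pairs (q,q') with gcd(q_r, q_r') > 1. -/
/-!
Any pair counted has a common prime factor `p > w`, so the sum is at most `∑_{p > w} S_p`, where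
`S_p` runs over pairs of multiples of `p`. Writing `n / φ(n) ≤ 2 ∑_{d ∣ n} 1/d` and exchanging
sums, `S_p ≤ 2 ∑_d (1/d) #{q ∼ Q : lcm(p, d) ∣ q}² ≪ Q² ∑_d 1/(d lcm(p, d)²) ≪ Q²/p²`.
Finally `∑_{p > w} 1/p² ≤ (log w)⁻¹ ∑_{p > w} log p/p² ≪ 1/(w log w)` by Chebyshev's bound
`θ(x) ≤ x log 4` on dyadic blocks.
-/

open Finset

open Real

theorem roughPart_eq_prod (w : ℝ) {q : ℕ} (hq : q ≠ 0) :
    roughPart w q = ∏ p ∈ q.primeFactors with ¬ ((p : ℕ) : ℝ) ≤ w, p ^ q.factorization p := by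
  have hsmooth : 0 < smoothPart w q :=
    prod_pos fun p hp => pow_pos (Nat.pos_of_mem_primeFactors (mem_filter.1 hp).1) _
  refine Nat.div_eq_of_eq_mul_left hsmooth ?_
  rw [smoothPart, mul_comm, prod_filter_mul_prod_filter_not,
    ← Nat.prod_factorization_eq_prod_primeFactors, Nat.prod_factorization_pow_eq_self hq]

theorem lt_and_dvd_of_prime_dvd_roughPart {w : ℝ} {p q : ℕ} (hq : q ≠ 0) (hp : p.Prime)
    (h : p ∣ roughPart w q) : w < p ∧ p ∣ q := by
  rw [roughPart_eq_prod w hq] at h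
  obtain ⟨r, hr, hpr⟩ := hp.prime.exists_mem_finset_dvd h
  obtain ⟨hrq, hrw⟩ := mem_filter.1 hr
  obtain rfl := (Nat.prime_dvd_prime_iff_eq hp (Nat.prime_of_mem_primeFactors hrq)).1
    (hp.dvd_of_dvd_pow hpr)
  exact ⟨lt_of_not_ge hrw, Nat.dvd_of_mem_primeFactors hrq⟩

theorem exists_prime_lt_dvd_of_one_lt_gcd_roughPart {w : ℝ} {q q' : ℕ} (hq : q ≠ 0)
    (hq' : q' ≠ 0) (h : 1 < Nat.gcd (roughPart w q) (roughPart w q')) :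
    ∃ p : ℕ, p.Prime ∧ w < p ∧ p ∣ q ∧ p ∣ q' := by
  set g := Nat.gcd (roughPart w q) (roughPart w q')
  have hg : g.minFac.Prime := Nat.minFac_prime h.ne'
  obtain ⟨hw, hpq⟩ := lt_and_dvd_of_prime_dvd_roughPart hq hg
    ((Nat.minFac_dvd g).trans (Nat.gcd_dvd_left _ _))
  obtain ⟨-, hpq'⟩ := lt_and_dvd_of_prime_dvd_roughPart hq' hg
    ((Nat.minFac_dvd g).trans (Nat.gcd_dvd_right _ _))
  exact ⟨g.minFac, hg, hw, hpq, hpq'⟩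

open ArithmeticFunction UniqueFactorizationMonoid in
theorem prod_primeFactors_one_add_inv_le_sum_divisors_inv {n : ℕ} (hn : n ≠ 0) :
    ∏ p ∈ n.primeFactors, (1 + (p : ℝ)⁻¹) ≤ ∑ d ∈ n.divisors, (d : ℝ)⁻¹ := by
  let f : ArithmeticFunction ℝ := pdiv zeta ArithmeticFunction.id
  have hf : f.IsMultiplicative := isMultiplicative_zeta.natCast.pdiv isMultiplicative_id.natCast
  have hfd : ∀ {d : ℕ}, d ≠ 0 → f d = (d : ℝ)⁻¹ := fun hd => by simp [f, hd]
  calc ∏ p ∈ n.primeFactors, (1 + (p : ℝ)⁻¹)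
      = ∏ p ∈ (radical n).primeFactors, (1 + f p) := by
        rw [Nat.primeFactors_radical]
        exact prod_congr rfl fun p hp => by rw [hfd (Nat.pos_of_mem_primeFactors hp).ne']
    _ = ∑ d ∈ (radical n).divisors, f d := hf.prodPrimeFactors_one_add_of_squarefree squarefree_radical
    _ ≤ ∑ d ∈ n.divisors, f d :=
        sum_le_sum_of_subset_of_nonneg (Nat.divisors_subset_of_dvd hn radical_dvd_self)
          fun d hd _ => by rw [hfd (Nat.pos_of_mem_divisors hd).ne']; positivity
    _ = ∑ d ∈ n.divisors, (d : ℝ)⁻¹ :=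
        sum_congr rfl fun d hd => hfd (Nat.pos_of_mem_divisors hd).ne'

theorem prod_Icc_one_sub_inv_sq (N : ℕ) :
    ∏ k ∈ Icc 2 (N + 1), (1 - ((k : ℝ) ^ 2)⁻¹) = (N + 2) / (2 * (N + 1)) := by
  induction N with
  | zero => norm_num
  | succ N ih =>
    rw [prod_Icc_succ_top (by omega), ih]
    push_cast
    field_simp
    ring

theorem one_half_le_prod_one_sub_inv_sq {s : Finset ℕ} (hs : ∀ k ∈ s, 2 ≤ k) :
    1 / 2 ≤ ∏ k ∈ s, (1 - ((k : ℝ) ^ 2)⁻¹) := by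
  set N := s.sup id
  have hsub : s ⊆ Icc 2 (N + 1) := fun k hk =>
    mem_Icc.2 ⟨hs k hk, (le_sup (f := id) hk).trans (Nat.le_succ N)⟩
  calc (1 : ℝ) / 2 ≤ (N + 2) / (2 * (N + 1)) := by
        rw [div_le_div_iff₀ (by norm_num) (by positivity)]; linarith
    _ = ∏ k ∈ Icc 2 (N + 1), (1 - ((k : ℝ) ^ 2)⁻¹) := (prod_Icc_one_sub_inv_sq N).symm
    _ ≤ ∏ k ∈ s, (1 - ((k : ℝ) ^ 2)⁻¹) := by
        refine prod_le_prod_of_subset_of_le_one hsub (fun k hk => ?_) fun k _ _ => by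
          simp only [sub_le_self_iff]; positivity
        have : (2 : ℝ) ≤ k := by exact_mod_cast (mem_Icc.1 hk).1
        exact sub_nonneg.2 (inv_le_one_of_one_le₀ (by nlinarith))

/-- `n / φ n = ∏ (1 + 1/p) / ∏ (1 - 1/p²)`, and the denominator is at least `1/2`. -/
theorem div_totient_le_two_mul_sum_divisors_inv {n : ℕ} (hn : n ≠ 0) :
    (n : ℝ) / n.totient ≤ 2 * ∑ d ∈ n.divisors, (d : ℝ)⁻¹ := by
  have htwo : ∀ p ∈ n.primeFactors, (2 : ℝ) ≤ p := fun p hp => by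
    exact_mod_cast (Nat.prime_of_mem_primeFactors hp).two_le
  have htot : (n.totient : ℝ) = n * ∏ p ∈ n.primeFactors, (1 - (p : ℝ)⁻¹) := by
    simpa using congrArg (Rat.cast : ℚ → ℝ) (Nat.totient_eq_mul_prod_factors n)
  have hsplit : ∏ p ∈ n.primeFactors, (1 - ((p : ℝ) ^ 2)⁻¹) =
      (∏ p ∈ n.primeFactors, (1 - (p : ℝ)⁻¹)) * ∏ p ∈ n.primeFactors, (1 + (p : ℝ)⁻¹) := by
    rw [← prod_mul_distrib]
    exact prod_congr rfl fun p _ => by ring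
  have hpos : 0 < ∏ p ∈ n.primeFactors, (1 - (p : ℝ)⁻¹) := prod_pos fun p hp => by
    have := htwo p hp
    rw [sub_pos]; exact inv_lt_one_of_one_lt₀ (by linarith)
  have hhalf := one_half_le_prod_one_sub_inv_sq (s := n.primeFactors) fun p hp =>
    (Nat.prime_of_mem_primeFactors hp).two_le
  rw [hsplit] at hhalf
  have hn' : (0 : ℝ) < n := by exact_mod_cast Nat.pos_of_ne_zero hn
  rw [htot, div_mul_cancel_left₀ hn'.ne', inv_le_iff_one_le_mul₀ hpos]
  nlinarith [prod_primeFactors_one_add_inv_le_sum_divisors_inv hn]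

theorem card_filter_dvd_Ioc_le (a N m : ℕ) : (#{q ∈ Ioc a N | m ∣ q} : ℝ) ≤ N / m := by
  have hcard : #{q ∈ Ioc a N | m ∣ q} ≤ N / m := by
    rw [← Nat.Ioc_filter_dvd_card_eq_div]
    exact card_le_card (filter_subset_filter _ (Ioc_subset_Ioc_left (Nat.zero_le a)))
  exact (Nat.cast_le.2 hcard).trans Nat.cast_div_le

theorem sum_Icc_inv_sq_le {k : ℕ} (hk : k ≠ 0) (N : ℕ) :
    ∑ d ∈ Icc k N, ((d : ℝ) ^ 2)⁻¹ ≤ 2 / k := by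
  have hsub : Icc k N ⊆ Ioo (k - 1) (N + 1) := fun d hd => by
    simp only [mem_Icc, mem_Ioo] at hd ⊢; omega
  calc ∑ d ∈ Icc k N, ((d : ℝ) ^ 2)⁻¹ ≤ ∑ d ∈ Ioo (k - 1) (N + 1), ((d : ℝ) ^ 2)⁻¹ :=
        sum_le_sum_of_subset_of_nonneg hsub fun _ _ _ => by positivity
    _ ≤ 2 / ((k - 1 : ℕ) + 1) := sum_Ioo_inv_sq_le _ _
    _ = 2 / k := by rw [Nat.cast_sub (Nat.one_le_iff_ne_zero.2 hk)]; ring_nf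

/-- Off multiples of `p` the lcm is `p * d`; on them it is `d ≥ p`. -/
theorem inv_mul_lcm_sq_le {p d : ℕ} (hp : p.Prime) (hd : d ≠ 0) :
    ((d : ℝ) * (p.lcm d : ℝ) ^ 2)⁻¹ ≤
      ((p : ℝ) ^ 2)⁻¹ * ((d : ℝ) ^ 2)⁻¹ + if p ≤ d then (p : ℝ)⁻¹ * ((d : ℝ) ^ 2)⁻¹ else 0 := by
  have hd1 : (1 : ℝ) ≤ d := by exact_mod_cast Nat.one_le_iff_ne_zero.2 hd
  have hp0 : (0 : ℝ) < p := by exact_mod_cast hp.pos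
  by_cases hpd : p ∣ d
  · have hle : p ≤ d := Nat.le_of_dvd (Nat.pos_of_ne_zero hd) hpd
    rw [Nat.lcm_eq_right hpd, if_pos hle]
    have : (p : ℝ) ≤ d := by exact_mod_cast hle
    calc ((d : ℝ) * (d : ℝ) ^ 2)⁻¹ ≤ (p : ℝ)⁻¹ * ((d : ℝ) ^ 2)⁻¹ := by
          rw [← mul_inv]; gcongr
      _ ≤ _ := le_add_of_nonneg_left (by positivity)
  · rw [(hp.coprime_iff_not_dvd.2 hpd).lcm_eq_mul]
    refine le_add_of_le_of_nonneg ?_ (by split_ifs <;> positivity)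
    push_cast
    rw [← mul_inv]
    refine inv_anti₀ (by positivity) ?_
    nlinarith [mul_nonneg (sq_nonneg ((p : ℝ) * d)) (sub_nonneg.2 hd1)]

theorem sum_inv_mul_lcm_sq_le {p : ℕ} (hp : p.Prime) (N : ℕ) :
    ∑ d ∈ Icc 1 N, ((d : ℝ) * (p.lcm d : ℝ) ^ 2)⁻¹ ≤ 4 / (p : ℝ) ^ 2 := by
  calc ∑ d ∈ Icc 1 N, ((d : ℝ) * (p.lcm d : ℝ) ^ 2)⁻¹
      ≤ ∑ d ∈ Icc 1 N, (((p : ℝ) ^ 2)⁻¹ * ((d : ℝ) ^ 2)⁻¹ +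
          if p ≤ d then (p : ℝ)⁻¹ * ((d : ℝ) ^ 2)⁻¹ else 0) :=
        sum_le_sum fun d hd => inv_mul_lcm_sq_le hp (Nat.one_le_iff_ne_zero.1 (mem_Icc.1 hd).1)
    _ = ((p : ℝ) ^ 2)⁻¹ * ∑ d ∈ Icc 1 N, ((d : ℝ) ^ 2)⁻¹ +
          (p : ℝ)⁻¹ * ∑ d ∈ Icc p N, ((d : ℝ) ^ 2)⁻¹ := by
        rw [sum_add_distrib, ← mul_sum, ← sum_filter, ← mul_sum]
        congr 3
        ext d; simp only [mem_filter, mem_Icc]; have := hp.one_le; omega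
    _ ≤ ((p : ℝ) ^ 2)⁻¹ * (2 / 1) + (p : ℝ)⁻¹ * (2 / p) := by
        gcongr
        · exact_mod_cast sum_Icc_inv_sq_le one_ne_zero N
        · exact sum_Icc_inv_sq_le hp.ne_zero N
    _ = 4 / (p : ℝ) ^ 2 := by field_simp; ring

theorem div_totient_gcd_le_sum_lcm_dvd {p q q' : ℕ} (hpq : p ∣ q) (hpq' : p ∣ q') (hq : q ≠ 0)
    {N : ℕ} (hqN : q ≤ N) :
    ((q.gcd q' : ℕ) : ℝ) / (q.gcd q').totient ≤
      2 * ∑ d ∈ Icc 1 N, if p.lcm d ∣ q ∧ p.lcm d ∣ q' then (d : ℝ)⁻¹ else 0 := by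
  have hg : q.gcd q' ≠ 0 := Nat.gcd_ne_zero_left hq
  have hdiv : (q.gcd q').divisors = {d ∈ Icc 1 N | p.lcm d ∣ q ∧ p.lcm d ∣ q'} := by
    ext d
    simp only [Nat.mem_divisors, mem_filter, mem_Icc, Nat.lcm_dvd_iff, Nat.dvd_gcd_iff]
    constructor
    · rintro ⟨⟨hdq, hdq'⟩, -⟩
      exact ⟨⟨Nat.pos_of_dvd_of_pos hdq (Nat.pos_of_ne_zero hq),
        (Nat.le_of_dvd (Nat.pos_of_ne_zero hq) hdq).trans hqN⟩, ⟨hpq, hdq⟩, hpq', hdq'⟩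
    · rintro ⟨-, ⟨-, hdq⟩, -, hdq'⟩
      exact ⟨⟨hdq, hdq'⟩, hg⟩
  rw [← sum_filter, ← hdiv]
  exact div_totient_le_two_mul_sum_divisors_inv hg

/-- Expanding `n / φ n` over divisors `d` of the gcd turns the pair sum into a sum of squared
counts of multiples of `lcm p d`. -/
theorem sum_pairs_dvd_div_totient_gcd_le {p : ℕ} (hp : p.Prime) (a N : ℕ) :
    ∑ q ∈ Ioc a N, ∑ q' ∈ Ioc a N,
      (if p ∣ q ∧ p ∣ q' then ((q.gcd q' : ℕ) : ℝ) / (q.gcd q').totient else 0) ≤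
        8 * (N : ℝ) ^ 2 / (p : ℝ) ^ 2 := by
  set I := Ioc a N
  let c : ℕ → ℝ := fun d => #{q ∈ I | p.lcm d ∣ q}
  have hpair : ∀ q ∈ I, ∀ q' ∈ I,
      (if p ∣ q ∧ p ∣ q' then ((q.gcd q' : ℕ) : ℝ) / (q.gcd q').totient else 0) ≤
        2 * ∑ d ∈ Icc 1 N, (d : ℝ)⁻¹ *
          ((if p.lcm d ∣ q then 1 else 0) * (if p.lcm d ∣ q' then 1 else 0)) := by
    intro q hq q' _
    have hind : ∀ d : ℕ, (d : ℝ)⁻¹ *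
        ((if p.lcm d ∣ q then 1 else 0) * (if p.lcm d ∣ q' then 1 else 0)) =
          if p.lcm d ∣ q ∧ p.lcm d ∣ q' then (d : ℝ)⁻¹ else 0 := fun d => by
      rw [ite_zero_mul_ite_zero, mul_one, mul_ite, mul_one, mul_zero]
    simp only [hind]
    split_ifs with h
    · obtain ⟨hq0, hqN⟩ := mem_Ioc.1 hq
      exact div_totient_gcd_le_sum_lcm_dvd h.1 h.2 (by omega) hqN
    · exact mul_nonneg zero_le_two (sum_nonneg fun d _ => by split_ifs <;> positivity)
  calc _ ≤ ∑ q ∈ I, ∑ q' ∈ I, 2 * ∑ d ∈ Icc 1 N, (d : ℝ)⁻¹ *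
          ((if p.lcm d ∣ q then 1 else 0) * (if p.lcm d ∣ q' then 1 else 0)) :=
        sum_le_sum fun q hq => sum_le_sum fun q' hq' => hpair q hq q' hq'
    _ = 2 * ∑ d ∈ Icc 1 N, (d : ℝ)⁻¹ * c d ^ 2 := by
        have hsq : ∀ d, c d ^ 2 = ∑ q ∈ I, ∑ q' ∈ I,
            (if p.lcm d ∣ q then (1 : ℝ) else 0) * (if p.lcm d ∣ q' then 1 else 0) := fun d => by
          rw [sq, ← sum_mul_sum, sum_boole]
        simp only [hsq, mul_sum]
        exact (sum_congr rfl fun q _ => sum_comm).trans sum_comm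
    _ ≤ 2 * ∑ d ∈ Icc 1 N, (d : ℝ)⁻¹ * (N / (p.lcm d : ℝ)) ^ 2 := by
        gcongr with d hd
        exact card_filter_dvd_Ioc_le a N _
    _ = 2 * N ^ 2 * ∑ d ∈ Icc 1 N, ((d : ℝ) * (p.lcm d : ℝ) ^ 2)⁻¹ := by
        simp only [mul_sum]
        exact sum_congr rfl fun d _ => by rw [div_pow, mul_inv]; ring
    _ ≤ 2 * N ^ 2 * (4 / (p : ℝ) ^ 2) := by gcongr; exact sum_inv_mul_lcm_sq_le hp N
    _ = 8 * (N : ℝ) ^ 2 / (p : ℝ) ^ 2 := by ring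

theorem sum_one_div_two_pow_le_two (t : Finset ℕ) : ∑ j ∈ t, (1 / 2 : ℝ) ^ j ≤ 2 :=
  (sum_le_sum_of_subset_of_nonneg (fun j hj => mem_range.2 (Nat.lt_succ_of_le (le_sup (f := id) hj)))
    fun _ _ _ => by positivity).trans (sum_geometric_two_le _)

theorem sum_log_le_theta {x : ℝ} {t : Finset ℕ} (ht : ∀ p ∈ t, p.Prime ∧ (p : ℝ) ≤ x) :
    ∑ p ∈ t, log p ≤ Chebyshev.theta x := by
  refine sum_le_sum_of_subset_of_nonneg (fun p hp => ?_) fun p _ _ => log_natCast_nonneg p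
  obtain ⟨hpp, hpx⟩ := ht p hp
  exact mem_filter.2 ⟨mem_Ioc.2 ⟨hpp.pos, Nat.le_floor hpx⟩, hpp⟩

/-- Chebyshev's bound `θ(x) ≤ x log 4`, summed over the dyadic blocks `2ʲ w ≤ p < 2ʲ⁺¹ w`. -/
theorem sum_log_div_sq_le {w : ℝ} (hw : 0 < w) {s : Finset ℕ} (hs : ∀ p ∈ s, p.Prime ∧ w < p) :
    ∑ p ∈ s, log p / (p : ℝ) ^ 2 ≤ 4 * log 4 / w := by
  let block : ℕ → ℕ := fun p => Nat.log 2 ⌊(p : ℝ) / w⌋₊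
  have hblock : ∀ p ∈ s, 2 ^ block p * w ≤ p ∧ (p : ℝ) < 2 ^ (block p + 1) * w := by
    intro p hp
    have hfloor : ⌊(p : ℝ) / w⌋₊ ≠ 0 :=
      (Nat.floor_pos.2 ((one_le_div hw).2 (hs p hp).2.le)).ne'
    constructor
    · have h := Nat.floor_le (div_nonneg (Nat.cast_nonneg p) hw.le)
      have : ((2 ^ block p : ℕ) : ℝ) ≤ ⌊(p : ℝ) / w⌋₊ := by
        exact_mod_cast Nat.pow_log_le_self 2 hfloor
      push_cast at this
      rw [← le_div_iff₀ hw]; linarith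
    · have := (Nat.floor_lt (div_nonneg (Nat.cast_nonneg p) hw.le)).1
        (Nat.lt_pow_succ_log_self one_lt_two ⌊(p : ℝ) / w⌋₊)
      push_cast at this
      rwa [div_lt_iff₀ hw] at this
  have hj : ∀ j, ∑ p ∈ s with block p = j, log p / (p : ℝ) ^ 2 ≤
      2 * log 4 / w * (1 / 2) ^ j := by
    intro j
    calc ∑ p ∈ s with block p = j, log p / (p : ℝ) ^ 2
        ≤ ∑ p ∈ s with block p = j, log p / (2 ^ j * w) ^ 2 := by
          refine sum_le_sum fun p hp => ?_
          obtain ⟨hps, rfl⟩ := mem_filter.1 hp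
          gcongr
          exact (hblock p hps).1
      _ = (∑ p ∈ s with block p = j, log p) / (2 ^ j * w) ^ 2 := by rw [sum_div]
      _ ≤ Chebyshev.theta (2 ^ (j + 1) * w) / (2 ^ j * w) ^ 2 := by
          gcongr
          refine sum_log_le_theta fun p hp => ?_
          obtain ⟨hps, rfl⟩ := mem_filter.1 hp
          exact ⟨(hs p hps).1, (hblock p hps).2.le⟩
      _ ≤ log 4 * (2 ^ (j + 1) * w) / (2 ^ j * w) ^ 2 := by
          gcongr
          exact Chebyshev.theta_le_log4_mul_x (by positivity)
      _ = 2 * log 4 / w * (1 / 2) ^ j := by rw [one_div, inv_pow, pow_succ]; field_simp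
  calc ∑ p ∈ s, log p / (p : ℝ) ^ 2
      = ∑ j ∈ s.image block, ∑ p ∈ s with block p = j, log p / (p : ℝ) ^ 2 :=
        (sum_fiberwise_of_maps_to (fun p hp => mem_image_of_mem block hp) _).symm
    _ ≤ ∑ j ∈ s.image block, 2 * log 4 / w * (1 / 2) ^ j := sum_le_sum fun j _ => hj j
    _ ≤ 2 * log 4 / w * 2 := by
        rw [← mul_sum]
        gcongr
        exact sum_one_div_two_pow_le_two _
    _ = 4 * log 4 / w := by ring

theorem sum_inv_sq_le_of_prime_of_lt {w : ℝ} (hw : 1 < w) {s : Finset ℕ}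
    (hs : ∀ p ∈ s, p.Prime ∧ w < p) :
    ∑ p ∈ s, ((p : ℝ) ^ 2)⁻¹ ≤ 4 * log 4 / (w * log w) := by
  have hw0 : 0 < w := by linarith
  have hlogw : 0 < log w := log_pos hw
  calc ∑ p ∈ s, ((p : ℝ) ^ 2)⁻¹ ≤ ∑ p ∈ s, log p / (p : ℝ) ^ 2 / log w := by
        refine sum_le_sum fun p hp => ?_
        have hlog : 1 ≤ log p / log w :=
          (one_le_div hlogw).2 (log_le_log hw0 (hs p hp).2.le)
        calc ((p : ℝ) ^ 2)⁻¹ = 1 * ((p : ℝ) ^ 2)⁻¹ := (one_mul _).symm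
          _ ≤ log p / log w * ((p : ℝ) ^ 2)⁻¹ := by gcongr
          _ = log p / (p : ℝ) ^ 2 / log w := by ring
    _ = (∑ p ∈ s, log p / (p : ℝ) ^ 2) / log w := by rw [sum_div]
    _ ≤ 4 * log 4 / w / log w := by gcongr; exact sum_log_div_sq_le hw0 hs
    _ = 4 * log 4 / (w * log w) := by rw [div_div]

theorem ite_one_lt_gcd_roughPart_le_sum_primes {w : ℝ} {q q' N : ℕ} (hq : q ≠ 0) (hq' : q' ≠ 0)
    (hqN : q ≤ N) {x : ℝ} (hx : 0 ≤ x) :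
    (if 1 < Nat.gcd (roughPart w q) (roughPart w q') then x else 0) ≤
      ∑ p ∈ Icc 1 N with p.Prime ∧ w < ((p : ℕ) : ℝ), if p ∣ q ∧ p ∣ q' then x else 0 := by
  split_ifs with h
  · obtain ⟨p, hp, hwp, hpq, hpq'⟩ := exists_prime_lt_dvd_of_one_lt_gcd_roughPart hq hq' h
    have hmem : p ∈ {p ∈ Icc 1 N | p.Prime ∧ w < ((p : ℕ) : ℝ)} :=
      mem_filter.2 ⟨mem_Icc.2 ⟨hp.one_le, (Nat.le_of_dvd (Nat.pos_of_ne_zero hq) hpq).trans hqN⟩,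
        hp, hwp⟩
    simpa [hpq, hpq'] using single_le_sum
      (f := fun p => if p ∣ q ∧ p ∣ q' then x else 0) (fun p _ => by positivity) hmem
  · exact sum_nonneg fun p _ => by positivity

/-- `∑_{q,q' ∼ Q, gcd(q_r,q_r') > 1} gcd(q,q')/φ(gcd(q,q')) ≪ Q²/(w log w)`, where
`q ∼ Q` means `Q < q ≤ 2Q` and `q_r` is the `w`-rough part of `q`. -/
theorem gcd_totient_rough_pairs_bound :
    ∃ C : ℝ, 0 < C ∧ ∀ (w : ℝ), 2 ≤ w → ∀ (Q : ℕ), 2 ≤ Q →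
      ∑ q ∈ Finset.Ioc Q (2 * Q), ∑ q' ∈ Finset.Ioc Q (2 * Q),
        (if 1 < Nat.gcd (roughPart w q) (roughPart w q') then
          ((Nat.gcd q q' : ℝ) / (Nat.totient (Nat.gcd q q') : ℝ)) else 0) ≤
      C * (Q : ℝ) ^ 2 / (w * Real.log w) := by
  refine ⟨128 * log 4, by positivity, fun w hw Q _ => ?_⟩
  set I := Ioc Q (2 * Q)
  set P := {p ∈ Icc 1 (2 * Q) | p.Prime ∧ w < ((p : ℕ) : ℝ)}
  have hI : ∀ q ∈ I, q ≠ 0 := fun q hq => ((Nat.zero_le Q).trans_lt (mem_Ioc.1 hq).1).ne'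
  calc _ ≤ ∑ q ∈ I, ∑ q' ∈ I, ∑ p ∈ P,
        if p ∣ q ∧ p ∣ q' then ((q.gcd q' : ℕ) : ℝ) / (q.gcd q').totient else 0 :=
        sum_le_sum fun q hq => sum_le_sum fun q' hq' =>
          ite_one_lt_gcd_roughPart_le_sum_primes (hI q hq) (hI q' hq') (mem_Ioc.1 hq).2
            (by positivity)
    _ = ∑ p ∈ P, ∑ q ∈ I, ∑ q' ∈ I,
        if p ∣ q ∧ p ∣ q' then ((q.gcd q' : ℕ) : ℝ) / (q.gcd q').totient else 0 :=
        (sum_congr rfl fun q _ => sum_comm).trans sum_comm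
    _ ≤ ∑ p ∈ P, 8 * ((2 * Q : ℕ) : ℝ) ^ 2 / (p : ℝ) ^ 2 :=
        sum_le_sum fun p hp => sum_pairs_dvd_div_totient_gcd_le (mem_filter.1 hp).2.1 Q (2 * Q)
    _ = 32 * (Q : ℝ) ^ 2 * ∑ p ∈ P, ((p : ℝ) ^ 2)⁻¹ := by
        rw [mul_sum]; push_cast; exact sum_congr rfl fun p _ => by ring
    _ ≤ 32 * (Q : ℝ) ^ 2 * (4 * log 4 / (w * log w)) := by
        gcongr
        exact sum_inv_sq_le_of_prime_of_lt (by linarith) fun p hp => (mem_filter.1 hp).2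
    _ = 128 * log 4 * (Q : ℝ) ^ 2 / (w * log w) := by ring
end
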